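/- arXiv:1606.07767 — 2 statements merged into one kernel-verified Lean document; each statement's English description precedes it below -/
import Mathlib

section
/- If the linear term dS = ⟨g(w), dg(w, dw)⟩ of the Taylor expansion of S at w in the direction dw is strictly positive, then the norm of the backpropagated gradient increases after the weight correction: there exists ε > 0 such that for all t with 0 < t < ε, ‖g(w + t·dw)‖ > ‖g(w)‖. (Increase direction of Theorem 1 of the paper.) -/
open Matrix

/-- The embedding of `n → ℝ` into `EuclideanSpace ℝ n`, so that `‖euc x‖` is the
Euclidean norm of `x`. -/
noncomputable def euc {n : Type*} [Fintype n] (x : n → ℝ) : EuclideanSpace ℝ n :=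
  (EuclideanSpace.equiv n ℝ).symm x

/-- The backpropagated gradient vector `g(w) = D₁·w·D₂·w ⋯ D_h·w·δ`. -/
noncomputable def gVec {n : Type*} [Fintype n] [DecidableEq n] {h : ℕ}
    (D : Fin h → Matrix n n ℝ) (δ : n → ℝ) (w : Matrix n n ℝ) : n → ℝ :=
  (List.ofFn fun i : Fin h => D i * w).prod *ᵥ δ

/-- The vector `dg(w, dw) = Σ_{i=1}^{h} D₁·w ⋯ Dᵢ·dw ⋯ D_h·w·δ`, obtained from
`g(w)` by replacing the `i`-th occurrence of `w` by `dw` and summing over `i`. -/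
noncomputable def dgVec {n : Type*} [Fintype n] [DecidableEq n] {h : ℕ}
    (D : Fin h → Matrix n n ℝ) (δ : n → ℝ) (w dw : Matrix n n ℝ) : n → ℝ :=
  ∑ i : Fin h,
    (List.ofFn fun j : Fin h => if j = i then D j * dw else D j * w).prod *ᵥ δ

/-! The path `t ↦ g(w + t • dw)` is the product `∏ᵢ (Dᵢ w + t • Dᵢ dw)` applied to `δ`, so the
Leibniz rule for the multilinear map `(M₁, …, M_h) ↦ M₁ ⋯ M_h` gives it the derivative
`dg(w, dw)` at `0`. Hence `t ↦ ‖g(w + t • dw)‖²` has derivative `2 dS > 0` at `0`, and so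
exceeds `‖g(w)‖²` for all small `t > 0`. -/

open Filter Topology RealInnerProductSpace

-- Any norm inducing the product topology would do; this one makes matrices a normed algebra.
attribute [local instance] Matrix.linftyOpNormedRing Matrix.linftyOpNormedAlgebra

theorem hasDerivAt_list_prod_ofFn_add_smul {𝕜 A : Type*} [NontriviallyNormedField 𝕜]
    [NormedRing A] [NormedAlgebra 𝕜 A] {h : ℕ} (a b : Fin h → A) :
    HasDerivAt (fun t : 𝕜 => (List.ofFn fun i => a i + t • b i).prod)
      (∑ i, (List.ofFn fun j => if j = i then b j else a j).prod) 0 := by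
  have hline : HasDerivAt (fun t : 𝕜 => a + t • b) b 0 := by
    simpa using ((hasDerivAt_id (0 : 𝕜)).smul_const b).const_add a
  have hupdate (i : Fin h) : Function.update a i (b i) = fun j => if j = i then b j else a j :=
    funext fun j => by rw [Function.update_apply]; split_ifs with hji <;> simp [hji]
  have hprod := ((ContinuousMultilinearMap.mkPiAlgebraFin 𝕜 h A).hasFDerivAt
    (a + (0 : 𝕜) • b)).comp_hasDerivAt 0 hline
  rw [zero_smul, add_zero, ContinuousMultilinearMap.linearDeriv_apply] at hprod
  simp only [hupdate] at hprod
  exact hprod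

theorem hasDerivAt_gVec_add_smul {n : Type*} [Fintype n] [DecidableEq n] {h : ℕ}
    (D : Fin h → Matrix n n ℝ) (δ : n → ℝ) (w dw : Matrix n n ℝ) :
    HasDerivAt (fun t : ℝ => gVec D δ (w + t • dw)) (dgVec D δ w dw) 0 := by
  have hprod := hasDerivAt_list_prod_ofFn_add_smul (𝕜 := ℝ) (fun i => D i * w) (fun i => D i * dw)
  have hg := ((Matrix.mulVecBilin ℝ ℝ).flip δ).toContinuousLinearMap.hasFDerivAt.comp_hasDerivAt
    0 hprod
  simp only [LinearMap.coe_toContinuousLinearMap', LinearMap.flip_apply,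
    Matrix.mulVecBilin_apply, Function.comp_def] at hg
  simp only [gVec, dgVec, Matrix.mul_add, Matrix.mul_smul]
  refine hg.congr_deriv ?_
  -- `map_sum` does not fire: the sum is taken in the normed-ring copy of the matrix addition.
  change (∑ i, _) *ᵥ δ = _
  exact Matrix.sum_mulVec _ _ _

theorem HasDerivAt.eventually_nhdsGT_lt {f : ℝ → ℝ} {f' x : ℝ} (hf : HasDerivAt f f' x)
    (hf' : 0 < f') : ∀ᶠ t in 𝓝[>] x, f x < f t := by
  filter_upwards [(hf.tendsto_slope.mono_left (nhdsGT_le_nhdsNE x)).eventually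
    (eventually_gt_nhds hf'), self_mem_nhdsWithin] with t hslope hxt
  exact (slope_pos_iff_of_le hxt.le).mp hslope

theorem HasDerivAt.eventually_nhdsGT_norm_lt {E : Type*} [NormedAddCommGroup E]
    [InnerProductSpace ℝ E] {G : ℝ → E} {G' : E} {x : ℝ} (hG : HasDerivAt G G' x)
    (hpos : 0 < ⟪G x, G'⟫) : ∀ᶠ t in 𝓝[>] x, ‖G x‖ < ‖G t‖ :=
  (hG.norm_sq.eventually_nhdsGT_lt (by positivity)).mono fun _ ht =>
    lt_of_pow_lt_pow_left₀ 2 (norm_nonneg _) ht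

theorem norm_increases_of_dS_pos_general
    {n : Type*} [Fintype n] [DecidableEq n] (h : ℕ)
    (D : Fin h → Matrix n n ℝ) (δ : n → ℝ)
    (w dw : Matrix n n ℝ)
    (hpos : (0 : ℝ) < inner ℝ (euc (gVec D δ w)) (euc (dgVec D δ w dw))) :
    ∃ ε > (0 : ℝ), ∀ t : ℝ, 0 < t → t < ε →
      ‖euc (gVec D δ (w + t • dw))‖ > ‖euc (gVec D δ w)‖ := by
  have hG : HasDerivAt (fun t : ℝ => euc (gVec D δ (w + t • dw))) (euc (dgVec D δ w dw)) 0 :=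
    (EuclideanSpace.equiv n ℝ).symm.hasFDerivAt.comp_hasDerivAt 0
      (hasDerivAt_gVec_add_smul D δ w dw)
  have hlt : ∀ᶠ t in 𝓝[>] (0 : ℝ), ‖euc (gVec D δ w)‖ < ‖euc (gVec D δ (w + t • dw))‖ := by
    simpa using HasDerivAt.eventually_nhdsGT_norm_lt hG (by simpa using hpos)
  obtain ⟨ε, hε, hIoo⟩ := mem_nhdsGT_iff_exists_Ioo_subset.mp hlt
  exact ⟨ε, hε, fun t ht₀ htε => hIoo ⟨ht₀, htε⟩⟩

/-- **Theorem 1 (increase direction).** If the linear term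
`dS = ⟨g(w), dg(w, dw)⟩` of the Taylor expansion of `S` at `w` in the direction `dw`
is strictly positive, then the norm of the backpropagated gradient increases after
the weight correction: there exists `ε > 0` such that for all `0 < t < ε`,
`‖g(w + t·dw)‖ > ‖g(w)‖`. -/
theorem norm_increases_of_dS_pos
    {n : Type*} [Fintype n] [DecidableEq n] (h : ℕ) (hh : 1 ≤ h)
    (D : Fin h → Matrix n n ℝ) (hD : ∀ i, (D i).IsDiag) (δ : n → ℝ)
    (w dw : Matrix n n ℝ)
    (hpos : (0 : ℝ) < inner ℝ (euc (gVec D δ w)) (euc (dgVec D δ w dw))) :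
    ∃ ε > (0 : ℝ), ∀ t : ℝ, 0 < t → t < ε →
      ‖euc (gVec D δ (w + t • dw))‖ > ‖euc (gVec D δ w)‖ :=
  norm_increases_of_dS_pos_general h D δ w dw hpos
end

section
/- Exploding-gradient bound: let δ : ℕ → ℝⁿ satisfy the backpropagation recursion δ(k−j) = δ(k−j+1)·(wᵀ·Dⱼ) for j = 1, …, h. If there is a constant γ > 0 such that every factor wᵀ·Dⱼ is invertible with operator norm of the inverse satisfying ‖(wᵀ·Dⱼ)⁻¹‖ ≤ 1/γ for all j = 1, …, h, then ‖δ(k−h)‖ ≥ γ^h · ‖δ(k)‖. In particular, if γ > 1 and δ(k) ≠ 0, the norm of the backpropagated gradient grows at least exponentially in the depth h. -/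
open Matrix

/-- The operator norm, with respect to the Euclidean norm on `ℝⁿ`, of the linear map
`v ↦ v·M` (row-vector convention; this map is `v ↦ Mᵀ·v` on column vectors). -/
noncomputable def rowOpNorm {n : Type*} [Fintype n] [DecidableEq n]
    (M : Matrix n n ℝ) : ℝ :=
  ‖LinearMap.toContinuousLinearMap (Matrix.toEuclideanLin Mᵀ)‖

lemma euc_vecMul {n : Type*} [Fintype n] [DecidableEq n] (v : n → ℝ) (M : Matrix n n ℝ) :
    euc (v ᵥ* M) = LinearMap.toContinuousLinearMap (Matrix.toEuclideanLin Mᵀ) (euc v) := by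
  ext i
  simp [euc, Matrix.toEuclideanLin, Matrix.vecMul_transpose, Matrix.mulVec_transpose]

lemma step_bound {n : Type*} [Fintype n] [DecidableEq n] (M : Matrix n n ℝ) (hM : IsUnit M)
    (γ : ℝ) (hγ : 0 < γ) (hle : rowOpNorm M⁻¹ ≤ 1 / γ) (v : n → ℝ) :
    γ * ‖euc v‖ ≤ ‖euc (v ᵥ* M)‖ := by
  have h1 : (v ᵥ* M) ᵥ* M⁻¹ = v := by
    rw [Matrix.vecMul_vecMul, Matrix.mul_nonsing_inv _ ((Matrix.isUnit_iff_isUnit_det M).mp hM),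
      Matrix.vecMul_one]
  have h2 : ‖euc v‖ ≤ rowOpNorm M⁻¹ * ‖euc (v ᵥ* M)‖ := by
    conv_lhs => rw [← h1, euc_vecMul]
    exact (LinearMap.toContinuousLinearMap (Matrix.toEuclideanLin M⁻¹ᵀ)).le_opNorm _
  have h3 : ‖euc v‖ ≤ (1 / γ) * ‖euc (v ᵥ* M)‖ :=
    h2.trans (mul_le_mul_of_nonneg_right hle (norm_nonneg _))
  calc γ * ‖euc v‖ ≤ γ * ((1 / γ) * ‖euc (v ᵥ* M)‖) := by
        exact mul_le_mul_of_nonneg_left h3 hγ.le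
    _ = ‖euc (v ᵥ* M)‖ := by field_simp

/-- **Exploding-gradient bound.** If `δ` satisfies the backpropagation recursion
`δ(k−j) = δ(k−j+1)·(wᵀ·Dⱼ)` for `j = 1, …, h` and every factor `wᵀ·Dⱼ` is invertible
with `‖(wᵀ·Dⱼ)⁻¹‖ ≤ 1/γ` for some `γ > 0`, then `‖δ(k−h)‖ ≥ γ^h · ‖δ(k)‖`. -/
theorem exploding_gradient_bound
    {n : Type*} [Fintype n] [DecidableEq n] (h k : ℕ) (hh : 1 ≤ h) (hk : h ≤ k)
    (w : Matrix n n ℝ) (D : Fin h → Matrix n n ℝ) (hD : ∀ j, (D j).IsDiag)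
    (δ : ℕ → n → ℝ)
    (hrec : ∀ j : Fin h, δ (k - (j.val + 1)) = δ (k - j.val) ᵥ* (wᵀ * D j))
    (γ : ℝ) (hγ : 0 < γ)
    (hinv : ∀ j : Fin h, IsUnit (wᵀ * D j))
    (hnorm : ∀ j : Fin h, rowOpNorm ((wᵀ * D j)⁻¹) ≤ 1 / γ) :
    ‖euc (δ (k - h))‖ ≥ γ ^ h * ‖euc (δ k)‖ := by
  suffices H : ∀ m : ℕ, m ≤ h → γ ^ m * ‖euc (δ k)‖ ≤ ‖euc (δ (k - m))‖ from H h le_rfl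
  intro m hm
  induction m with
  | zero => simp
  | succ m ih =>
    have hm' : m < h := hm
    have key := step_bound (wᵀ * D ⟨m, hm'⟩) (hinv ⟨m, hm'⟩) γ hγ (hnorm ⟨m, hm'⟩) (δ (k - m))
    rw [← hrec ⟨m, hm'⟩] at key
    calc γ ^ (m + 1) * ‖euc (δ k)‖ = γ * (γ ^ m * ‖euc (δ k)‖) := by ring
      _ ≤ γ * ‖euc (δ (k - m))‖ := mul_le_mul_of_nonneg_left (ih hm'.le) hγ.le
      _ ≤ ‖euc (δ (k - (m + 1)))‖ := key
end
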